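/- Let n be a positive integer and x⋆ ∈ {0,1}^n, and define the n×n matrix Q̂² (with indices 1 ≤ i, j ≤ n) by Q̂²_{ij} = max(i, j) if x⋆_i x⋆_j = 1 and Q̂²_{ij} = −max(i, j) otherwise. Then Q̂² is symmetric, and x⋆ is both the unique 1-bit-flip local maximum and the unique global maximum over {0,1}^n of f̂²(x) = xᵀQ̂²x. -/

import Mathlib

/-- UBQP objective `f_Q(x) = xᵀQx`. -/
def fQ {n : ℕ} (Q : Fin n → Fin n → ℝ) (x : Fin n → ℝ) : ℝ :=
  ∑ i, ∑ j, Q i j * x i * x j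

/-- `flipBit x k` is `x` with its `k`-th coordinate flipped (`0 ↔ 1` on binary vectors). -/
def flipBit {n : ℕ} (x : Fin n → ℝ) (k : Fin n) : Fin n → ℝ :=
  Function.update x k (1 - x k)

/-- `x` is a binary (0/1) vector. -/
def IsBinary {n : ℕ} (x : Fin n → ℝ) : Prop := ∀ i, x i = 0 ∨ x i = 1

/-- The toy matrix `Q̂²` ("construct by ±i") with 1-based indices: entry `max(i, j)` if
`x⋆_i x⋆_j = 1`, and `−max(i, j)` otherwise. -/
noncomputable def Qhat2 {n : ℕ} (xs : Fin n → ℝ) : Fin n → Fin n → ℝ :=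
  fun i j => if xs i * xs j = 1 then ((max i.1 j.1 : ℕ) + 1 : ℝ)
             else -((max i.1 j.1 : ℕ) + 1 : ℝ)

/-!
Only the sign pattern of `Q̂²` matters: it is positive on `supp x⋆ × supp x⋆` and negative
elsewhere. Hence every term `Q_ij x_i x_j` of a binary `x` is at most the corresponding term of
`x⋆`, strictly on the diagonal where `x` and `x⋆` differ. For a binary `x ≠ x⋆`, either some bit
of `x` lies outside `supp x⋆`, and switching it off removes only negative terms, or
`supp x ⊊ supp x⋆`, and switching on a missing bit adds only positive terms; so `x` is not a
1-bit-flip local maximum.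
-/

/-- The paper's "positive/negative element distribution" shared by `Q̂¹` and `Q̂²`. -/
def SignPattern {n : ℕ} (Q : Fin n → Fin n → ℝ) (xs : Fin n → ℝ) : Prop :=
  ∀ i j, (xs i = 1 → xs j = 1 → 0 < Q i j) ∧ (xs i = 0 ∨ xs j = 0 → Q i j < 0)

theorem Qhat2_symm {n : ℕ} (xs : Fin n → ℝ) (i j : Fin n) : Qhat2 xs i j = Qhat2 xs j i := by
  unfold Qhat2
  rw [mul_comm (xs i), Nat.max_comm]

theorem Qhat2_signPattern {n : ℕ} (xs : Fin n → ℝ) : SignPattern (Qhat2 xs) xs := by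
  intro i j
  have hM : (0 : ℝ) < ((max i.1 j.1 : ℕ) + 1 : ℝ) := by positivity
  refine ⟨fun hi hj => ?_, fun h => ?_⟩
  · simpa only [Qhat2, hi, hj, mul_one, ↓reduceIte] using hM
  · have : xs i * xs j ≠ 1 := by rcases h with h | h <;> simp [h]
    simp only [Qhat2, this, ↓reduceIte]
    linarith

section

variable {n : ℕ}

theorem isBinary_flipBit {x : Fin n → ℝ} (hx : IsBinary x) (k : Fin n) :
    IsBinary (flipBit x k) := by
  intro i
  rw [flipBit, Function.update_apply]
  split_ifs with h
  · subst h
    rcases hx i with h | h <;> simp [h]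
  · exact hx i

theorem flipBit_ne {x : Fin n → ℝ} (hx : IsBinary x) (k : Fin n) : flipBit x k ≠ x := by
  intro h
  have := congrFun h k
  rw [flipBit, Function.update_self] at this
  rcases hx k with h | h <;> rw [h] at this <;> norm_num at this

theorem fQ_lt_fQ_of_le_of_lt {Q : Fin n → Fin n → ℝ} {x y : Fin n → ℝ}
    (hle : ∀ i j, Q i j * x i * x j ≤ Q i j * y i * y j) (k : Fin n)
    (hlt : Q k k * x k * x k < Q k k * y k * y k) : fQ Q x < fQ Q y :=
  Finset.sum_lt_sum (fun i _ => Finset.sum_le_sum fun j _ => hle i j)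
    ⟨k, Finset.mem_univ k, Finset.sum_lt_sum (fun j _ => hle k j) ⟨k, Finset.mem_univ k, hlt⟩⟩

theorem term_le_of_update {Q : Fin n → Fin n → ℝ} {x : Fin n → ℝ} {k : Fin n} {v : ℝ}
    (hrow : ∀ j, Q k j * x k * x j ≤ Q k j * v * Function.update x k v j)
    (hcol : ∀ i, Q i k * x i * x k ≤ Q i k * Function.update x k v i * v) (i j : Fin n) :
    Q i j * x i * x j ≤ Q i j * Function.update x k v i * Function.update x k v j := by
  by_cases hi : i = k
  · subst hi
    simpa only [Function.update_self] using hrow j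
  by_cases hj : j = k
  · subst hj
    simpa only [Function.update_self] using hcol i
  rw [Function.update_of_ne hi, Function.update_of_ne hj]

namespace SignPattern

variable {Q : Fin n → Fin n → ℝ} {xs x : Fin n → ℝ}

theorem term_le (hQ : SignPattern Q xs) (hxs : IsBinary xs) (hx : IsBinary x) (i j : Fin n) :
    Q i j * x i * x j ≤ Q i j * xs i * xs j := by
  obtain ⟨hpos, hneg⟩ := hQ i j
  rcases hxs i with h1 | h1 <;> rcases hxs j with h2 | h2 <;>
    rcases hx i with h3 | h3 <;> rcases hx j with h4 | h4 <;>
    simp_all [le_of_lt]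

theorem diag_lt (hQ : SignPattern Q xs) (hxs : IsBinary xs) (hx : IsBinary x) {k : Fin n}
    (hk : x k ≠ xs k) : Q k k * x k * x k < Q k k * xs k * xs k := by
  obtain ⟨hpos, hneg⟩ := hQ k k
  rcases hxs k with h1 | h1 <;> rcases hx k with h3 | h3 <;>
    simp_all

theorem fQ_lt (hQ : SignPattern Q xs) (hxs : IsBinary xs) (hx : IsBinary x) (hne : x ≠ xs) :
    fQ Q x < fQ Q xs := by
  obtain ⟨k, hk⟩ := Function.ne_iff.mp hne
  exact fQ_lt_fQ_of_le_of_lt (hQ.term_le hxs hx) k (hQ.diag_lt hxs hx hk)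

theorem fQ_lt_flipBit_of_one_of_zero (hQ : SignPattern Q xs) (hx : IsBinary x) {k : Fin n}
    (hxk : x k = 1) (hxsk : xs k = 0) : fQ Q x < fQ Q (flipBit x k) := by
  have hrow : ∀ j, Q k j * x k * x j ≤ Q k j * 0 * Function.update x k 0 j := fun j => by
    have := (hQ k j).2 (Or.inl hxsk)
    rcases hx j with h | h <;> simp [hxk, h, this.le]
  have hcol : ∀ i, Q i k * x i * x k ≤ Q i k * Function.update x k 0 i * 0 := fun i => by
    have := (hQ i k).2 (Or.inr hxsk)
    rcases hx i with h | h <;> simp [hxk, h, this.le]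
  have hflip : flipBit x k = Function.update x k 0 := by rw [flipBit, hxk, sub_self]
  rw [hflip]
  refine fQ_lt_fQ_of_le_of_lt (term_le_of_update hrow hcol) k ?_
  simpa [hxk] using (hQ k k).2 (Or.inl hxsk)

theorem fQ_lt_flipBit_of_zero_of_one (hQ : SignPattern Q xs) (hx : IsBinary x)
    (hsupp : ∀ j, x j = 1 → xs j = 1) {k : Fin n} (hxk : x k = 0) (hxsk : xs k = 1) :
    fQ Q x < fQ Q (flipBit x k) := by
  have hsupp' : ∀ j, Function.update x k 1 j = 0 ∨ Function.update x k 1 j = 1 ∧ xs j = 1 := by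
    intro j
    by_cases h : j = k
    · subst h
      simp [hxsk]
    · rw [Function.update_of_ne h]
      exact (hx j).imp_right fun hxj => ⟨hxj, hsupp j hxj⟩
  have hrow : ∀ j, Q k j * x k * x j ≤ Q k j * 1 * Function.update x k 1 j := fun j => by
    rcases hsupp' j with h | ⟨h, hxsj⟩
    · simp [hxk, h]
    · simp [hxk, h, ((hQ k j).1 hxsk hxsj).le]
  have hcol : ∀ i, Q i k * x i * x k ≤ Q i k * Function.update x k 1 i * 1 := fun i => by
    rcases hsupp' i with h | ⟨h, hxsi⟩
    · simp [hxk, h]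
    · simp [hxk, h, ((hQ i k).1 hxsi hxsk).le]
  have hflip : flipBit x k = Function.update x k 1 := by rw [flipBit, hxk, sub_zero]
  rw [hflip]
  refine fQ_lt_fQ_of_le_of_lt (term_le_of_update hrow hcol) k ?_
  simpa [hxk] using (hQ k k).1 hxsk hxsk

theorem eq_of_forall_flipBit_le (hQ : SignPattern Q xs) (hxs : IsBinary xs) (hx : IsBinary x)
    (hloc : ∀ k, fQ Q (flipBit x k) ≤ fQ Q x) : x = xs := by
  have hsupp : ∀ j, x j = 1 → xs j = 1 := fun j hxj =>
    (hxs j).resolve_left fun hxsj =>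
      (hloc j).not_gt (hQ.fQ_lt_flipBit_of_one_of_zero hx hxj hxsj)
  funext k
  rcases hx k with hxk | hxk
  · rcases hxs k with hxsk | hxsk
    · rw [hxk, hxsk]
    · exact absurd (hQ.fQ_lt_flipBit_of_zero_of_one hx hsupp hxk hxsk) (hloc k).not_gt
  · rw [hxk, hsupp k hxk]

end SignPattern

end

theorem Qhat2_unimodal_general {n : ℕ}
    (xs : Fin n → ℝ) (hxs : IsBinary xs) :
    (∀ i j, Qhat2 xs i j = Qhat2 xs j i) ∧
    (∀ k, fQ (Qhat2 xs) (flipBit xs k) ≤ fQ (Qhat2 xs) xs) ∧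
    (∀ x : Fin n → ℝ, IsBinary x →
      (∀ k, fQ (Qhat2 xs) (flipBit x k) ≤ fQ (Qhat2 xs) x) → x = xs) ∧
    (∀ x : Fin n → ℝ, IsBinary x → x ≠ xs → fQ (Qhat2 xs) x < fQ (Qhat2 xs) xs) := by
  have hQ := Qhat2_signPattern xs
  refine ⟨Qhat2_symm xs, fun k => ?_, fun x hx hloc => hQ.eq_of_forall_flipBit_le hxs hx hloc,
    fun x hx hne => hQ.fQ_lt hxs hx hne⟩
  exact (hQ.fQ_lt hxs (isBinary_flipBit hxs k) (flipBit_ne hxs k)).le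

/-- `Q̂²` is symmetric and `x⋆` is its unique 1-bit-flip local maximum and its
unique global maximum over `{0,1}^n`. -/
theorem Qhat2_unimodal {n : ℕ} (hn : 0 < n)
    (xs : Fin n → ℝ) (hxs : IsBinary xs) :
    (∀ i j, Qhat2 xs i j = Qhat2 xs j i) ∧
    (∀ k, fQ (Qhat2 xs) (flipBit xs k) ≤ fQ (Qhat2 xs) xs) ∧
    (∀ x : Fin n → ℝ, IsBinary x →
      (∀ k, fQ (Qhat2 xs) (flipBit x k) ≤ fQ (Qhat2 xs) x) → x = xs) ∧
    (∀ x : Fin n → ℝ, IsBinary x → x ≠ xs → fQ (Qhat2 xs) x < fQ (Qhat2 xs) xs) :=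
  Qhat2_unimodal_general xs hxs
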